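/- arXiv:math/0208022 — 7 statements merged into one kernel-verified Lean document; each statement's English description precedes it below -/
import Mathlib

section
/- Let G be a finite group acting transitively on a finite set X of cardinality n > 2. Then the number of derangements of G on X is at least |G|/n; equivalently, the proportion δ(G,X) of elements of G acting without fixed points on X satisfies δ(G,X) ≥ 1/n. -/
open MulAction Finset

/-- **Cameron–Cohen.** If a finite group `G` acts transitively on a finite set `X` of
cardinality `n > 2`, then the number of derangements (fixed-point-free elements) of `G`
on `X` is at least `|G|/n`; equivalently `δ(G,X) ≥ 1/n`. -/
theorem derangements_ge_card_div
    (G : Type*) [Group G] [Fintype G] (X : Type*) [Fintype X] [MulAction G X]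
    [MulAction.IsPretransitive G X] (hn : 2 < Fintype.card X) :
    (Fintype.card G : ℝ) / Fintype.card X ≤
      (Set.ncard {g : G | ∀ x : X, g • x ≠ x} : ℝ) := by
  classical
  set n := Fintype.card X with hn'
  have hX : Nonempty X := Fintype.card_pos_iff.mp (by omega)
  set D : Finset G := Finset.univ.filter (fun g => ∀ x : X, g • x ≠ x) with hD
  have hncard : {g : G | ∀ x : X, g • x ≠ x}.ncard = D.card := by
    rw [Set.ncard_eq_toFinset_card']
    congr 1
    ext g
    simp [hD]
  set f : G → ℕ := fun g => Fintype.card (fixedBy X g) with hf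
  -- Burnside on X
  have horb1 : Fintype.card (orbitRel.Quotient G X) = 1 := by
    have h1 : Subsingleton (orbitRel.Quotient G X) :=
      (pretransitive_iff_subsingleton_quotient G X).mp inferInstance
    have h2 : Nonempty (orbitRel.Quotient G X) :=
      (nonempty_quotient_iff _).mpr inferInstance
    obtain ⟨q⟩ := h2
    exact Fintype.card_eq_one_iff.mpr ⟨q, fun y => Subsingleton.elim y q⟩
  have b1 : ∑ g : G, f g = Fintype.card G := by
    have := sum_card_fixedBy_eq_card_orbits_mul_card_group G X
    rw [horb1, one_mul] at this
    exact this
  -- fixed points of the diagonal action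
  have hfix2 : ∀ g : G, Fintype.card (fixedBy (X × X) g) = f g * f g := by
    intro g
    rw [← Fintype.card_prod]
    refine Fintype.card_congr
      ⟨fun p => (⟨p.1.1, ?_⟩, ⟨p.1.2, ?_⟩), fun q => ⟨(q.1.1, q.2.1), ?_⟩, ?_, ?_⟩
    · have := p.2
      simp only [mem_fixedBy, Prod.smul_def, Prod.ext_iff] at this
      exact this.1
    · have := p.2
      simp only [mem_fixedBy, Prod.smul_def, Prod.ext_iff] at this
      exact this.2
    · have h1 := q.1.2
      have h2 := q.2.2
      simp only [mem_fixedBy] at h1 h2 ⊢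
      simp [Prod.smul_def, Prod.ext_iff, h1, h2]
    · intro p; rfl
    · intro q; rfl
  -- at least two orbits on X × X
  have horb2 : 2 ≤ Fintype.card (orbitRel.Quotient G (X × X)) := by
    obtain ⟨x, y, hxy⟩ := Fintype.exists_pair_of_one_lt_card (by omega : 1 < Fintype.card X)
    have hne : (Quotient.mk'' (x, x) : orbitRel.Quotient G (X × X)) ≠ Quotient.mk'' (x, y) := by
      intro h
      obtain ⟨g, hg⟩ := Quotient.eq''.mp h
      simp only [Prod.smul_def, Prod.ext_iff] at hg
      exact hxy (smul_left_cancel g (hg.1.trans hg.2.symm))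
    exact Fintype.one_lt_card_iff_nontrivial.mpr ⟨_, _, hne⟩
  have b2 : 2 * Fintype.card G ≤ ∑ g : G, f g * f g := by
    have hb := sum_card_fixedBy_eq_card_orbits_mul_card_group G (X × X)
    have : ∑ g : G, Fintype.card (fixedBy (X × X) g) = ∑ g : G, f g * f g :=
      Finset.sum_congr rfl fun g _ => hfix2 g
    rw [this] at hb
    rw [hb]
    exact Nat.mul_le_mul_right _ horb2
  -- pointwise inequality over ℤ
  have key : ∀ g : G, ((f g : ℤ)) ^ 2 + n ≤ (n + 1) * f g +
      n * (if (∀ x : X, g • x ≠ x) then 1 else 0) := by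
    intro g
    rcases Nat.eq_zero_or_pos (f g) with h0 | h1
    · have hder : ∀ x : X, g • x ≠ x := by
        intro x hx
        exact (Fintype.card_eq_zero_iff.mp h0).elim' ⟨x, hx⟩
      rw [if_pos hder, h0]
      push_cast
      nlinarith
    · have hle : f g ≤ n := Fintype.card_le_of_injective _ Subtype.val_injective
      have h1' : (1 : ℤ) ≤ f g := by exact_mod_cast h1
      have hle' : (f g : ℤ) ≤ n := by exact_mod_cast hle
      have hite : (0 : ℤ) ≤ (if (∀ x : X, g • x ≠ x) then 1 else 0) := by positivity
      nlinarith [mul_nonneg (by positivity : (0:ℤ) ≤ (n:ℤ)) hite]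
  -- sum everything
  have hsum := Finset.sum_le_sum (fun g (_ : g ∈ Finset.univ) => key g)
  rw [Finset.sum_add_distrib, Finset.sum_add_distrib, ← Finset.mul_sum, ← Finset.mul_sum,
    Finset.sum_const, Finset.sum_boole] at hsum
  have hS1 : ∑ g : G, (f g : ℤ) = Fintype.card G := by
    rw [← Nat.cast_sum _ f, b1]
  have hS2 : (2 * Fintype.card G : ℤ) ≤ ∑ g : G, (f g : ℤ) ^ 2 := by
    have : (2 * Fintype.card G : ℤ) ≤ ∑ g : G, ((f g : ℤ) * f g) := by
      exact_mod_cast b2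
    simpa [sq] using this
  have hfilter : (Finset.univ.filter (fun g : G => ∀ x : X, g • x ≠ x)).card = D.card := rfl
  have hmain : (Fintype.card G : ℤ) ≤ n * D.card := by
    rw [hS1, hfilter] at hsum
    simp only [Finset.card_univ, nsmul_eq_mul] at hsum
    nlinarith
  -- conclude over ℝ
  rw [hncard]
  rw [div_le_iff₀ (by positivity : (0:ℝ) < (n : ℝ))]
  have : (Fintype.card G : ℝ) ≤ n * D.card := by exact_mod_cast hmain
  linarith
end

section
/- Let A be a finite group acting transitively on a finite set X, let G be a normal subgroup of A acting transitively on X, and fix x₀ ∈ X. Let a ∈ A be an element stabilizing x₀ such that A is generated by G together with a. Set H = Stab_A(x₀) and K = Stab_G(x₀) = G ∩ H, and let d be the number of H-orbits on X that are also K-orbits. Then the number of elements of the coset aG having no fixed point on X is at least (d-1)·|K|; in particular the proportion of derangements in the coset aG is at least (d-1)/|X|. -/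
/-!
Double count the pairs `(b, y)` with `b • y = y`. If the orbit `O = K • x` is stable under `a⁻¹`,
each `y ∈ O` is fixed by some `a * k ∈ aK` (take `k • y = a⁻¹ • y`), so the elements of `aK` fixing
`y` form a coset of `K_y`, and by orbit–stabilizer the pairs with `y ∈ O` number `|O| |K_y| = |K|`.

For the transitive `G` this says that the elements of `aG` have `|G| = |aG|` fixed points in total.
For `K = G ∩ H` and the `d` common orbits, which `a ∈ H` preserves, the elements of `aK ⊆ aG` alone
have at least `d |K|` fixed points. Every other non-derangement of `aG` has at least one, so
`d |K| + (#non-derangements - |K|) ≤ |aG|`: the coset `aG` has at least `(d - 1) |K|` derangements.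
Finally `|G| = |X| |K|`.
-/

open MulAction Finset
open scoped Pointwise

def commonOrbits {A : Type*} [Group A] {X : Type*} [MulAction A X] (H K : Subgroup A) :
    Set (Set X) :=
  {O | (∃ x, O = orbit H x) ∧ ∀ x ∈ O, O = orbit K x}

theorem Finset.sum_le_card_filter_eq_zero_add_card {ι : Type*} [DecidableEq ι] {s t : Finset ι}
    (hst : s ⊆ t) (f : ι → ℕ) (ht : ∑ i ∈ t, f i ≤ #t) :
    ∑ i ∈ s, f i ≤ #{i ∈ t | f i = 0} + #s := by
  have h_split := sum_sdiff hst (f := f)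
  have h_nonzero : #{i ∈ t \ s | f i ≠ 0} ≤ ∑ i ∈ t \ s, f i := by
    rw [card_filter]
    exact sum_le_sum fun i _ => by split_ifs <;> omega
  have h_cover : #{i ∈ t | f i ≠ 0} ≤ #{i ∈ t \ s | f i ≠ 0} + #s := by
    refine (card_le_card fun i hi => ?_).trans (card_union_le _ _)
    by_cases his : i ∈ s
    · exact mem_union_right _ his
    · rw [mem_filter] at hi
      exact mem_union_left _ (mem_filter.2 ⟨mem_sdiff.2 ⟨hi.1, his⟩, hi.2⟩)
  have h_total : #{i ∈ t | f i = 0} + #{i ∈ t | f i ≠ 0} = #t :=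
    card_filter_add_card_filter_not _
  omega

section MulAction

variable {A X : Type*} [Group A] [MulAction A X]

theorem card_inf_stabilizer_mul_ncard_orbit (K : Subgroup A) (x : X) :
    Nat.card (K ⊓ stabilizer A x : Subgroup A) * (orbit K x).ncard = Nat.card K := by
  have h : (stabilizer A x).subgroupOf K = stabilizer K x := by ext; rfl
  rw [← index_stabilizer, ← h, ← Subgroup.relIndex, ← Subgroup.inf_relIndex_left,
    ← Subgroup.relIndex_bot_left, ← Subgroup.relIndex_bot_left,
    Subgroup.relIndex_mul_relIndex _ _ _ bot_le inf_le_left]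

theorem ncard_leftCoset_inter_stabilizer (K : Subgroup A) {a c : A} {x : X} (hc : a⁻¹ * c ∈ K)
    (hcx : c • x = x) :
    {b : A | a⁻¹ * b ∈ K ∧ b • x = x}.ncard = Nat.card (K ⊓ stabilizer A x : Subgroup A) := by
  have : {b : A | a⁻¹ * b ∈ K ∧ b • x = x} = c • ((K ⊓ stabilizer A x : Subgroup A) : Set A) := by
    ext b
    rw [Set.mem_smul_set_iff_inv_smul_mem]
    simp only [Set.mem_ofPred_eq, SetLike.mem_coe, Subgroup.mem_inf, mem_stabilizer_iff,
      smul_eq_mul, mul_smul]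
    rw [inv_smul_eq_iff, hcx, ← K.mul_mem_cancel_left hc (y := c⁻¹ * b), mul_assoc,
      mul_inv_cancel_left]
  rw [this, Set.ncard_smul_set]
  exact (Nat.card_coe_set_eq _).symm

section Finite

open scoped Classical

variable [Fintype X]

theorem sum_card_fixedPoints_eq_sum_card_stabilizing (s : Finset A) :
    ∑ b ∈ s, #{x : X | b • x = x} = ∑ x : X, #{b ∈ s | b • x = x} := by
  simp only [card_filter]
  exact sum_comm

variable [Fintype A]

theorem sum_card_leftCoset_stabilizing_orbit (K : Subgroup A) (a : A) (x : X)
    (ha : ∀ y ∈ orbit K x, a⁻¹ • y ∈ orbit K x) :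
    ∑ y ∈ (orbit K x).toFinset, #{b | a⁻¹ * b ∈ K ∧ b • y = y} = Nat.card K := by
  have h_term : ∀ y ∈ (orbit K x).toFinset,
      #{b | a⁻¹ * b ∈ K ∧ b • y = y} = Nat.card (K ⊓ stabilizer A y : Subgroup A) := by
    intro y hy
    rw [Set.mem_toFinset] at hy
    obtain ⟨k, hk : k • y = a⁻¹ • y⟩ := (orbit_eq_iff.2 hy).symm ▸ ha y hy
    have hak : a⁻¹ * (a * k) ∈ K := by simp
    have hak_fix : (a * k) • y = y := by rw [mul_smul, ← Subgroup.smul_def, hk, smul_inv_smul]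
    rw [← ncard_leftCoset_inter_stabilizer K hak hak_fix, Set.ncard_eq_toFinset_card',
      Set.toFinset_ofPred]
  have h_card : ∀ y ∈ (orbit K x).toFinset,
      Nat.card (K ⊓ stabilizer A y : Subgroup A) * (orbit K x).ncard = Nat.card K := by
    intro y hy
    rw [← orbit_eq_iff.2 (Set.mem_toFinset.1 hy), card_inf_stabilizer_mul_ncard_orbit]
  have h_pos : 0 < (orbit K x).ncard := (Set.ncard_pos (Set.toFinite _)).2 (nonempty_orbit x)
  apply Nat.eq_of_mul_eq_mul_right h_pos
  rw [sum_congr rfl h_term, sum_mul, sum_congr rfl h_card, sum_const, smul_eq_mul,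
    Set.ncard_eq_toFinset_card', mul_comm]

theorem card_leftCoset (K : Subgroup A) (a : A) : #{b | a⁻¹ * b ∈ K} = Nat.card K := by
  have : {b : A | a⁻¹ * b ∈ K} = a • (K : Set A) := by ext b; exact (mem_leftCoset_iff a).symm
  rw [← Set.toFinset_ofPred, ← Set.ncard_eq_toFinset_card', this, Set.ncard_smul_set]
  exact (Nat.card_coe_set_eq _).symm

theorem sum_card_fixedPoints_leftCoset_of_isPretransitive (G : Subgroup A) [IsPretransitive G X]
    [Nonempty X] (a : A) :
    ∑ b with a⁻¹ * b ∈ G, #{x : X | b • x = x} = Nat.card G := by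
  obtain ⟨x⟩ := ‹Nonempty X›
  have h_univ : (orbit G x).toFinset = univ := by simp [orbit_eq_univ]
  rw [sum_card_fixedPoints_eq_sum_card_stabilizing,
    ← sum_card_leftCoset_stabilizing_orbit G a x (by simp [orbit_eq_univ]), h_univ]
  simp only [filter_filter]

theorem ncard_commonOrbits_mul_card_le_sum_card_fixedPoints (H K : Subgroup A) {a : A}
    (ha : a ∈ H) :
    (commonOrbits H K : Set (Set X)).ncard * Nat.card K ≤
      ∑ b with a⁻¹ * b ∈ K, #{x : X | b • x = x} := by
  set 𝒪 := (commonOrbits H K : Set (Set X)).toFinset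
  have h_disj : (𝒪 : Set (Set X)).PairwiseDisjoint fun O => O.toFinset := by
    intro O hO O' hO' hne
    obtain ⟨⟨x, rfl⟩, -⟩ := Set.mem_toFinset.1 hO
    obtain ⟨⟨x', rfl⟩, -⟩ := Set.mem_toFinset.1 hO'
    exact Set.disjoint_toFinset.2 ((orbit.eq_or_disjoint x x').resolve_left hne)
  have h_orbit : ∀ O ∈ 𝒪, ∑ y ∈ O.toFinset, #{b | a⁻¹ * b ∈ K ∧ b • y = y} = Nat.card K := by
    intro O hO
    obtain ⟨⟨x, hxH⟩, hxK⟩ := Set.mem_toFinset.1 hO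
    obtain rfl := hxK x (hxH ▸ mem_orbit_self x)
    refine sum_card_leftCoset_stabilizing_orbit K a x fun y hy => ?_
    rw [hxH] at hy ⊢
    exact mem_orbit_of_mem_orbit (⟨a⁻¹, inv_mem ha⟩ : H) hy
  calc (commonOrbits H K : Set (Set X)).ncard * Nat.card K
      = ∑ O ∈ 𝒪, Nat.card K := by rw [sum_const, smul_eq_mul, Set.ncard_eq_toFinset_card']
    _ = ∑ O ∈ 𝒪, ∑ y ∈ O.toFinset, #{b | a⁻¹ * b ∈ K ∧ b • y = y} :=
        sum_congr rfl fun O hO => (h_orbit O hO).symm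
    _ = ∑ y ∈ 𝒪.biUnion fun O => O.toFinset, #{b | a⁻¹ * b ∈ K ∧ b • y = y} :=
        (sum_biUnion h_disj).symm
    _ ≤ ∑ y, #{b | a⁻¹ * b ∈ K ∧ b • y = y} := sum_le_sum_of_subset (subset_univ _)
    _ = ∑ b with a⁻¹ * b ∈ K, #{x : X | b • x = x} := by
        rw [sum_card_fixedPoints_eq_sum_card_stabilizing]
        simp only [filter_filter]

theorem ncard_commonOrbits_mul_card_le_ncard_derangements_add_card (G H K : Subgroup A)
    [IsPretransitive G X] [Nonempty X] (hKG : K ≤ G) {a : A} (ha : a ∈ H) :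
    (commonOrbits H K : Set (Set X)).ncard * Nat.card K ≤
      {b : A | a⁻¹ * b ∈ G ∧ ∀ x : X, b • x ≠ x}.ncard + Nat.card K := by
  have h_fixed : ∑ b with a⁻¹ * b ∈ G, #{x : X | b • x = x} ≤ #{b | a⁻¹ * b ∈ G} := by
    rw [sum_card_fixedPoints_leftCoset_of_isPretransitive, card_leftCoset]
  have h_sub : ({b | a⁻¹ * b ∈ K} : Finset A) ⊆ ({b | a⁻¹ * b ∈ G} : Finset A) :=
    monotone_filter_right _ fun _ _ hb => hKG hb
  have h_derangements : {b : A | a⁻¹ * b ∈ G ∧ ∀ x : X, b • x ≠ x}.ncard =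
      #{b ∈ {b | a⁻¹ * b ∈ G} | #{x : X | b • x = x} = 0} := by
    rw [Set.ncard_eq_toFinset_card', Set.toFinset_ofPred, filter_filter]
    simp [card_eq_zero, filter_eq_empty_iff]
  have h_count := sum_le_card_filter_eq_zero_add_card h_sub _ h_fixed
  rw [card_leftCoset] at h_count
  rw [h_derangements]
  exact (ncard_commonOrbits_mul_card_le_sum_card_fixedPoints H K ha).trans h_count

end Finite

end MulAction

theorem coset_derangements_ge_of_common_orbits_general
    (A : Type*) [Group A] [Fintype A] (X : Type*) [Fintype X] [MulAction A X]
    (G : Subgroup A)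
    (hGtrans : ∀ x y : X, ∃ g ∈ G, g • x = y)
    (x₀ : X) (a : A) (ha : a • x₀ = x₀) :
    ((Set.ncard {O : Set X |
          (∃ x : X, O = MulAction.orbit (MulAction.stabilizer A x₀) x) ∧
          ∀ x ∈ O, O = MulAction.orbit (G ⊓ MulAction.stabilizer A x₀ : Subgroup A) x}
        : ℝ) - 1) * Nat.card (G ⊓ MulAction.stabilizer A x₀ : Subgroup A) ≤
      (Set.ncard {b : A | a⁻¹ * b ∈ G ∧ ∀ x : X, b • x ≠ x} : ℝ) ∧
    ((Set.ncard {O : Set X |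
          (∃ x : X, O = MulAction.orbit (MulAction.stabilizer A x₀) x) ∧
          ∀ x ∈ O, O = MulAction.orbit (G ⊓ MulAction.stabilizer A x₀ : Subgroup A) x}
        : ℝ) - 1) / Fintype.card X ≤
      (Set.ncard {b : A | a⁻¹ * b ∈ G ∧ ∀ x : X, b • x ≠ x} : ℝ) / Nat.card G := by
  classical
  set K := G ⊓ stabilizer A x₀
  have : IsPretransitive G X := ⟨fun x y => let ⟨g, hg, h⟩ := hGtrans x y; ⟨⟨g, hg⟩, h⟩⟩
  have : Nonempty X := ⟨x₀⟩
  have h_main : ((commonOrbits (stabilizer A x₀) K : Set (Set X)).ncard - 1 : ℝ) * Nat.card K ≤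
      {b : A | a⁻¹ * b ∈ G ∧ ∀ x : X, b • x ≠ x}.ncard := by
    rw [sub_one_mul, sub_le_iff_le_add]
    exact_mod_cast ncard_commonOrbits_mul_card_le_ncard_derangements_add_card (X := X) G _ K
      inf_le_left (mem_stabilizer_iff.2 ha)
  have h_GK : Nat.card G = Fintype.card X * Nat.card K := by
    rw [← card_inf_stabilizer_mul_ncard_orbit G x₀, orbit_eq_univ, Set.ncard_univ,
      Nat.card_eq_fintype_card (α := X), mul_comm]
  have h_K : (Nat.card K : ℝ) ≠ 0 := Nat.cast_ne_zero.2 Nat.card_pos.ne'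
  refine ⟨h_main, ?_⟩
  rw [h_GK, Nat.cast_mul, ← mul_div_mul_right _ (Fintype.card X : ℝ) h_K]
  exact div_le_div_of_nonneg_right h_main (by positivity)

/-- Let `A` act transitively on a finite set `X`, let `G ⊴ A` also act transitively,
fix `x₀ ∈ X`, and let `a ∈ A` stabilize `x₀` with `A` generated by `G` together with
`a`.  Set `H = Stab_A(x₀)`, `K = G ∩ H`, and let `d` be the number of `H`-orbits on `X`
that are also `K`-orbits.  Then the number of derangements in the coset `aG` is at
least `(d-1)|K|`; in particular the proportion of derangements in the coset `aG` is at
least `(d-1)/|X|`. -/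
theorem coset_derangements_ge_of_common_orbits
    (A : Type*) [Group A] [Fintype A] (X : Type*) [Fintype X] [MulAction A X]
    [MulAction.IsPretransitive A X]
    (G : Subgroup A) [G.Normal]
    (hGtrans : ∀ x y : X, ∃ g ∈ G, g • x = y)
    (x₀ : X) (a : A) (ha : a • x₀ = x₀)
    (hgen : Subgroup.closure (insert a (G : Set A)) = ⊤) :
    ((Set.ncard {O : Set X |
          (∃ x : X, O = MulAction.orbit (MulAction.stabilizer A x₀) x) ∧
          ∀ x ∈ O, O = MulAction.orbit (G ⊓ MulAction.stabilizer A x₀ : Subgroup A) x}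
        : ℝ) - 1) * Nat.card (G ⊓ MulAction.stabilizer A x₀ : Subgroup A) ≤
      (Set.ncard {b : A | a⁻¹ * b ∈ G ∧ ∀ x : X, b • x ≠ x} : ℝ) ∧
    ((Set.ncard {O : Set X |
          (∃ x : X, O = MulAction.orbit (MulAction.stabilizer A x₀) x) ∧
          ∀ x ∈ O, O = MulAction.orbit (G ⊓ MulAction.stabilizer A x₀ : Subgroup A) x}
        : ℝ) - 1) / Fintype.card X ≤
      (Set.ncard {b : A | a⁻¹ * b ∈ G ∧ ∀ x : X, b • x ≠ x} : ℝ) / Nat.card G :=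
  coset_derangements_ge_of_common_orbits_general A X G hGtrans x₀ a ha
end

section
/- Let A be a finite group acting transitively on a finite set X of cardinality n, let G be a normal subgroup of A acting transitively on X, and let a ∈ A be such that A is generated by G together with a. If (A,G,X) is not exceptional, i.e., there exist x ≠ y in X such that the A-orbit of the pair (x,y) on X × X equals its G-orbit, then the number of elements of the coset aG having no fixed point on X is at least |G|/n. -/
/-!
Count the pairs `(b, p)` with `b ∈ aG` fixing `p`. If `S` is a `G`-orbit mapped into itself by
`a⁻¹`, every `p ∈ S` is fixed by some element of `aG`, hence by exactly `|G| / |S|` of them, so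
the elements of `aG` have on average one fixed point in `S`. This applies both to `S = X` and to
the orbital `O = A • (x, y) = G • (x, y)`. An element `b` with `f b` fixed points on `X` fixes at
most `f b (f b - 1) ≤ n (f b - 1)` points of the off-diagonal set `O`, so
`|G| ≤ n ∑_{b ∈ aG} (f b - 1)`, with truncated subtraction. Since `∑_{b ∈ aG} f b = |G| = |aG|`,
the right-hand sum is exactly the number of derangements in `aG`.
-/

open Finset MulAction
open scoped Pointwise

section CosetCounting

variable {A Y : Type*} [Group A] [Fintype A] [MulAction A Y] (G : Subgroup A)
  [DecidablePred (· ∈ G)] (a : A) [DecidableEq Y]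

lemma card_coset_fixing_mul_ncard_orbit {p : Y} (hp : a⁻¹ • p ∈ orbit G p) :
    #{b | a⁻¹ * b ∈ G ∧ b • p = p} * (orbit G p).ncard = Nat.card G := by
  classical
  obtain ⟨g, hg⟩ := hp
  replace hg : (g : A) • p = a⁻¹ • p := hg
  -- `b ↦ (a g)⁻¹ b` maps the elements of `aG` fixing `p` onto the stabilizer of `p` in `G`.
  have hcard : #{b | a⁻¹ * b ∈ G ∧ b • p = p} = Nat.card (stabilizer G p) := by
    rw [Nat.card_eq_fintype_card, ← card_univ]
    refine Finset.card_bij' (fun b hb => ⟨⟨(g : A)⁻¹ * (a⁻¹ * b), ?_⟩, ?_⟩)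
      (fun s _ => a * g * s) (fun _ _ => mem_univ _) ?_ ?_ ?_
    · simp only [mem_filter, mem_univ, true_and] at hb
      exact G.mul_mem (G.inv_mem g.2) hb.1
    · simp only [mem_filter, mem_univ, true_and] at hb
      change ((g : A)⁻¹ * (a⁻¹ * b)) • p = p
      rw [mul_smul, mul_smul, hb.2, ← hg, inv_smul_smul]
    · intro s _
      have hs : (s : A) • p = p := s.2
      simp only [mem_filter, mem_univ, true_and]
      refine ⟨by simpa [mul_assoc] using G.mul_mem g.2 s.1.2, ?_⟩
      rw [mul_smul, mul_smul, hs, hg, smul_inv_smul]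
    · intro b _; simp [mul_assoc]
    · intro s _; ext; simp [mul_assoc]
  rw [hcard, ← index_stabilizer, Subgroup.card_mul_index]

lemma card_filter_inv_mul_mem : #{b | a⁻¹ * b ∈ G} = Nat.card G := by
  have : (({b | a⁻¹ * b ∈ G} : Finset A) : Set A) = a • (G : Set A) := by
    ext b; simp [mem_leftCoset_iff]
  rw [← Set.ncard_coe_finset, this, Set.ncard_smul_set, ← Nat.card_coe_set_eq]
  rfl

lemma sum_card_fixedPoints_of_orbit_eq {p₀ : Y} {S : Finset Y} (hS : orbit G p₀ = S)
    (haS : ∀ p ∈ S, a⁻¹ • p ∈ S) :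
    ∑ b ∈ {b | a⁻¹ * b ∈ G}, #{p ∈ S | b • p = p} = Nat.card G := by
  have hp₀ : p₀ ∈ S := by rw [← mem_coe, ← hS]; exact mem_orbit_self p₀
  have horbit : ∀ p ∈ S, orbit G p = (S : Set Y) := fun p hp => by
    rw [← hS, orbit_eq_iff, hS]; exact hp
  have hswap : ∑ b ∈ {b | a⁻¹ * b ∈ G}, #{p ∈ S | b • p = p}
      = ∑ p ∈ S, #{b | a⁻¹ * b ∈ G ∧ b • p = p} := by
    simpa only [bipartiteAbove, bipartiteBelow, filter_filter] using
      sum_card_bipartiteAbove_eq_sum_card_bipartiteBelow (s := {b | a⁻¹ * b ∈ G}) (t := S)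
        (fun (b : A) (p : Y) => b • p = p)
  rw [hswap]
  refine Nat.eq_of_mul_eq_mul_right (card_pos.mpr ⟨p₀, hp₀⟩) ?_
  calc (∑ p ∈ S, #{b | a⁻¹ * b ∈ G ∧ b • p = p}) * #S
      = ∑ p ∈ S, #{b | a⁻¹ * b ∈ G ∧ b • p = p} * (orbit G p).ncard := by
        rw [sum_mul]
        refine sum_congr rfl fun p hp => ?_
        rw [horbit p hp, Set.ncard_coe_finset]
    _ = Nat.card G * #S := by
        rw [sum_congr rfl fun p hp => card_coset_fixing_mul_ncard_orbit G a
          (by rw [horbit p hp]; exact haS p hp), sum_const, smul_eq_mul, mul_comm]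

end CosetCounting

lemma card_fixedPoints_offDiag_le {M X : Type*} [SMul M X] [Fintype X] [DecidableEq X]
    (b : M) {T : Finset (X × X)} (hT : ∀ q ∈ T, q.1 ≠ q.2) :
    #{q ∈ T | b • q = q} ≤ Fintype.card X * (#{x : X | b • x = x} - 1) := by
  set F : Finset X := {x | b • x = x}
  calc #{q ∈ T | b • q = q} ≤ #F.offDiag := by
        refine card_le_card fun q hq => ?_
        simp only [mem_filter] at hq
        simp only [F, mem_offDiag, mem_filter, mem_univ, true_and]
        exact ⟨congrArg Prod.fst hq.2, congrArg Prod.snd hq.2, hT q hq.1⟩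
    _ = #F * (#F - 1) := by rw [offDiag_card, Nat.mul_sub_one]
    _ ≤ Fintype.card X * (#F - 1) := Nat.mul_le_mul_right _ (card_le_univ _)

lemma fst_ne_snd_of_mem_orbit {A X : Type*} [Group A] [MulAction A X] {x y : X} (hxy : x ≠ y)
    {q : X × X} (hq : q ∈ orbit A (x, y)) : q.1 ≠ q.2 := by
  obtain ⟨c, rfl⟩ := hq
  exact fun h => hxy (smul_left_cancel c h)

lemma sum_tsub_one_add_card {ι : Type*} (s : Finset ι) (f : ι → ℕ) :
    ∑ i ∈ s, (f i - 1) + #s = ∑ i ∈ s, f i + #{i ∈ s | f i = 0} := by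
  rw [card_eq_sum_ones, card_filter, ← sum_add_distrib, ← sum_add_distrib]
  exact sum_congr rfl fun i _ => by split_ifs <;> omega

theorem coset_derangements_ge_of_not_exceptional_general
    (A : Type*) [Group A] [Fintype A] (X : Type*) [Fintype X] [MulAction A X]
    (G : Subgroup A)
    (hGtrans : ∀ x y : X, ∃ g ∈ G, g • x = y)
    (a : A)
    (hne : ∃ x y : X, x ≠ y ∧
      MulAction.orbit A ((x, y) : X × X) = MulAction.orbit G ((x, y) : X × X)) :
    (Nat.card G : ℝ) / Fintype.card X ≤
      (Set.ncard {b : A | a⁻¹ * b ∈ G ∧ ∀ x : X, b • x ≠ x} : ℝ) := by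
  classical
  have : IsPretransitive G X := ⟨fun x y => by
    obtain ⟨g, hg, rfl⟩ := hGtrans x y
    exact ⟨⟨g, hg⟩, rfl⟩⟩
  obtain ⟨x₀, y₀, hxy, horb⟩ := hne
  set C : Finset A := {b | a⁻¹ * b ∈ G}
  set fix : A → ℕ := fun b => #{x : X | b • x = x}
  set O : Finset (X × X) := (orbit A (x₀, y₀)).toFinset
  have hfix : ∑ b ∈ C, fix b = Nat.card G :=
    sum_card_fixedPoints_of_orbit_eq G a (p₀ := x₀) (S := univ)
      (by rw [coe_univ, orbit_eq_univ]) (fun _ _ => mem_univ _)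
  have hfixO : ∑ b ∈ C, #{q ∈ O | b • q = q} = Nat.card G :=
    sum_card_fixedPoints_of_orbit_eq G a (p₀ := (x₀, y₀)) (by rw [Set.coe_toFinset, horb])
      (fun q hq => by simpa [O] using mem_orbit_of_mem_orbit a⁻¹ (Set.mem_toFinset.mp hq))
  have hO : ∀ q ∈ O, q.1 ≠ q.2 := fun _ hq => fst_ne_snd_of_mem_orbit hxy (Set.mem_toFinset.mp hq)
  have hC : #C = Nat.card G := card_filter_inv_mul_mem G a
  have hD : Set.ncard {b : A | a⁻¹ * b ∈ G ∧ ∀ x : X, b • x ≠ x} = #{b ∈ C | fix b = 0} := by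
    rw [Set.ncard_eq_toFinset_card', Set.toFinset_ofPred, filter_filter]
    simp [fix, filter_eq_empty_iff]
  have key : Nat.card G ≤ Fintype.card X * #{b ∈ C | fix b = 0} := by
    have hsum := sum_tsub_one_add_card C fix
    calc Nat.card G = ∑ b ∈ C, #{q ∈ O | b • q = q} := hfixO.symm
      _ ≤ ∑ b ∈ C, Fintype.card X * (fix b - 1) :=
          sum_le_sum fun b _ => card_fixedPoints_offDiag_le b hO
      _ = Fintype.card X * #{b ∈ C | fix b = 0} := by rw [← mul_sum]; congr 1; omega
  have hX : 0 < Fintype.card X := Fintype.card_pos_iff.mpr ⟨x₀⟩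
  rw [hD, div_le_iff₀ (mod_cast hX), mul_comm]
  exact_mod_cast key

/-- Let `A` act transitively on a finite set `X` of cardinality `n`, let `G ⊴ A` also
act transitively, and let `a ∈ A` be such that `A` is generated by `G` together with
`a`.  If `(A,G,X)` is not exceptional — i.e. there exist `x ≠ y` in `X` whose pair
`(x,y)` has the same `A`-orbit and `G`-orbit in `X × X` — then the number of
derangements in the coset `aG` is at least `|G|/n`. -/
theorem coset_derangements_ge_of_not_exceptional
    (A : Type*) [Group A] [Fintype A] (X : Type*) [Fintype X] [MulAction A X]
    [MulAction.IsPretransitive A X]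
    (G : Subgroup A) [G.Normal]
    (hGtrans : ∀ x y : X, ∃ g ∈ G, g • x = y)
    (a : A) (hgen : Subgroup.closure (insert a (G : Set A)) = ⊤)
    (hne : ∃ x y : X, x ≠ y ∧
      MulAction.orbit A ((x, y) : X × X) = MulAction.orbit G ((x, y) : X × X)) :
    (Nat.card G : ℝ) / Fintype.card X ≤
      (Set.ncard {b : A | a⁻¹ * b ∈ G ∧ ∀ x : X, b • x ≠ x} : ℝ) :=
  coset_derangements_ge_of_not_exceptional_general A X G hGtrans a hne
end

section
/- Let G be a solvable group and H a proper subgroup of G. Then the union of the conjugates of H is not all of G; that is, there exists g ∈ G such that g ∉ xHx⁻¹ for every x ∈ G. -/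
/-!
Induct on the derived length. If the conjugates of `H` cover `G` and `A` is the last nontrivial
term of the derived series, then the conjugates of the image of `A ⊔ H` cover `G ⧸ A`, so by
induction `A ⊔ H = ⊤`. Every conjugate of `H` is then a conjugate by an element of the abelian
normal subgroup `A`, and such a conjugation fixes `A` pointwise; hence `A ≤ H` and `H = ⊤`.
-/

namespace Subgroup

variable {G G' : Type*} [Group G] [Group G']

def ConjugatesCover (H : Subgroup G) : Prop :=
  ∀ g : G, ∃ x : G, x⁻¹ * g * x ∈ H

namespace ConjugatesCover

variable {H : Subgroup G}

theorem map {f : G →* G'} (hf : Function.Surjective f) (hH : H.ConjugatesCover) :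
    (H.map f).ConjugatesCover := by
  intro g'
  obtain ⟨g, rfl⟩ := hf g'
  obtain ⟨x, hx⟩ := hH g
  exact ⟨f x, by simpa using mem_map_of_mem f hx⟩

theorem mono {K : Subgroup G} (hHK : H ≤ K) (hH : H.ConjugatesCover) : K.ConjugatesCover :=
  fun g ↦ (hH g).imp fun _ hx ↦ hHK hx

theorem le_of_commutator_eq_bot {A : Subgroup G} [A.Normal] (hA : ⁅A, A⁆ = ⊥)
    (hAH : A ⊔ H = ⊤) (hH : H.ConjugatesCover) : A ≤ H := by
  intro a ha
  obtain ⟨x, hx⟩ := hH a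
  obtain ⟨n, hn, h, hh, rfl⟩ := mem_sup_of_normal_left.mp (hAH ▸ mem_top x : x ∈ A ⊔ H)
  have hna : a * n = n * a := (commutator_eq_bot_iff_le_centralizer.mp hA) hn a ha
  have hconj : (n * h)⁻¹ * a * (n * h) = h⁻¹ * a * h := by
    rw [mul_inv_rev, show h⁻¹ * n⁻¹ * a * (n * h) = h⁻¹ * (n⁻¹ * (a * n)) * h by group, hna]
    group
  rw [hconj] at hx
  simpa [mul_assoc] using H.mul_mem (H.mul_mem hh hx) (H.inv_mem hh)

theorem eq_top_of_derivedSeries_eq_bot {n : ℕ} (hn : derivedSeries G n = ⊥)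
    (hH : H.ConjugatesCover) : H = ⊤ := by
  induction n generalizing G with
  | zero =>
    rw [derivedSeries_zero] at hn
    exact eq_top_iff.mpr (hn ▸ bot_le)
  | succ m ih =>
    set A := derivedSeries G m
    have hA : ⁅A, A⁆ = ⊥ := by rwa [← derivedSeries_succ]
    have hquot : derivedSeries (G ⧸ A) m = ⊥ := by
      rw [← map_derivedSeries_eq (QuotientGroup.mk'_surjective A), map_eq_bot_iff,
        QuotientGroup.ker_mk']
    have hAH : A ⊔ H = ⊤ := by
      have hker : (QuotientGroup.mk' A).ker ≤ A ⊔ H :=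
        (QuotientGroup.ker_mk' A).le.trans le_sup_left
      rw [← comap_map_eq_self hker,
        ih hquot ((hH.mono le_sup_right).map (QuotientGroup.mk'_surjective A)), comap_top]
    exact eq_top_iff.mpr (hAH ▸ sup_le (hH.le_of_commutator_eq_bot hA hAH) le_rfl)

theorem eq_top [Group.IsSolvable G] (hH : H.ConjugatesCover) : H = ⊤ :=
  let ⟨_, hn⟩ := Group.IsSolvable.solvable (G := G)
  eq_top_of_derivedSeries_eq_bot hn hH

end ConjugatesCover

end Subgroup

/-- If `G` is a solvable group and `H` is a proper subgroup, then the union of all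
conjugates of `H` is not all of `G`: some `g ∈ G` lies in no conjugate `xHx⁻¹`. -/
theorem solvable_union_conjugates_ne
    (G : Type*) [Group G] [Group.IsSolvable G] (H : Subgroup G) (hH : H ≠ ⊤) :
    ∃ g : G, ∀ x : G, x⁻¹ * g * x ∉ H := by
  by_contra! hcover
  exact hH (Subgroup.ConjugatesCover.eq_top hcover)
end

section
/- Let A be a finite group and G a normal Hall subgroup of A (i.e., |G| is coprime to the index [A:G]). Let D be a complement to G in A (a subgroup with A = GD and G ∩ D = 1), let H = N_A(D) be the normalizer of D in A, and let X = A/H be the coset space with A acting by left multiplication. Then (A,G,X) is exceptional: whenever the A-orbit of a pair (x,y) ∈ X × X coincides with its G-orbit, then x = y. -/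
/-!
If the `A`-orbit and the `G`-orbit of `(aH, bH)` agree, then `A = G S` for the stabilizer `S`
of the pair, so by Schur–Zassenhaus `S` contains a complement `E` of `G ∩ S` in `S`, of order
`[A : G] = |D|`. Since `E` fixes `aH`, it lies in `aHa⁻¹ = N_A(aDa⁻¹)`, in which the Hall
subgroup `aDa⁻¹` is normal; a normal Hall subgroup is the only subgroup of its order, so
`E = aDa⁻¹`. Likewise `E = bDb⁻¹`, hence `a⁻¹b` normalizes `D` and `aH = bH`.
-/

namespace MulAction

theorem stabilizer_prod_eq_inf {M α β : Type*} [Group M] [MulAction M α] [MulAction M β]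
    (x : α) (y : β) : stabilizer M (x, y) = stabilizer M x ⊓ stabilizer M y := by
  ext g
  simp only [mem_stabilizer_iff, Subgroup.mem_inf, Prod.smul_mk, Prod.ext_iff]

theorem sup_stabilizer_eq_top_of_orbit_eq {A α : Type*} [Group A] [MulAction A α]
    {G : Subgroup A} {x : α} (h : orbit A x = orbit G x) : G ⊔ stabilizer A x = ⊤ := by
  refine eq_top_iff.mpr fun c _ => ?_
  obtain ⟨g, hg⟩ : c • x ∈ orbit G x := h ▸ mem_orbit x c
  change (g : A) • x = c • x at hg
  have hgc : (g : A)⁻¹ * c ∈ stabilizer A x := by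
    rw [mem_stabilizer_iff, mul_smul, ← hg, inv_smul_smul]
  simpa using Subgroup.mul_mem_sup g.2 hgc

end MulAction

namespace Subgroup

variable {A : Type*} [Group A]

/-- The image of `P` in `N_A(D) ⧸ D` has order dividing both `|P|` and `[N_A(D) : D] ∣ [A : D]`. -/
theorem le_of_le_normalizer_of_coprime {P D : Subgroup A} (hP : P ≤ normalizer (D : Set A))
    (hcop : Nat.Coprime (Nat.card P) D.index) : P ≤ D := by
  set N := normalizer (D : Set A)
  let φ := QuotientGroup.mk' (D.subgroupOf N)
  have hdvd_P : Nat.card ((P.subgroupOf N).map φ) ∣ Nat.card P :=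
    (card_map_dvd _ φ).trans (Nat.card_congr (subgroupOfEquivOfLe hP).toEquiv).dvd
  have hdvd_index : Nat.card ((P.subgroupOf N).map φ) ∣ D.index :=
    (card_subgroup_dvd_card _).trans (relIndex_dvd_index_of_le le_normalizer)
  have hbot : (P.subgroupOf N).map φ = ⊥ :=
    card_eq_one.mp (Nat.eq_one_of_dvd_coprimes hcop hdvd_P hdvd_index)
  rw [map_eq_bot_iff, QuotientGroup.ker_mk'] at hbot
  exact fun p hp => hbot (show ⟨p, hP hp⟩ ∈ P.subgroupOf N from hp)

theorem eq_of_le_normalizer_of_card_eq [Finite A] {P D : Subgroup A}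
    (hD : Nat.Coprime (Nat.card D) D.index) (hP : P ≤ normalizer (D : Set A))
    (hcard : Nat.card P = Nat.card D) : P = D :=
  eq_of_le_of_card_ge (le_of_le_normalizer_of_coprime hP (hcard ▸ hD)) hcard.ge

theorem exists_le_card_eq_index_of_sup_eq_top {G K : Subgroup A} [G.Normal]
    (hG : Nat.Coprime (Nat.card G) G.index) (hGK : G ⊔ K = ⊤) :
    ∃ E ≤ K, Nat.card E = G.index := by
  have hindex : (G.subgroupOf K).index = G.index := by
    rw [← relIndex, ← relIndex_sup_left, hGK, relIndex_top_right]
  have hcard : Nat.card (G.subgroupOf K) ∣ Nat.card G := by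
    rw [← card_map_of_injective K.subtype_injective, subgroupOf_map_subtype]
    exact card_dvd_of_le inf_le_left
  obtain ⟨E, hE⟩ := exists_right_complement'_of_coprime (N := G.subgroupOf K)
    (hindex ▸ hG.coprime_dvd_left hcard)
  refine ⟨E.map K.subtype, map_subtype_le E, ?_⟩
  rw [card_map_of_injective K.subtype_injective, ← hE.symm.index_eq_card, hindex]

theorem stabilizer_mk_eq_map_conj (H : Subgroup A) (a : A) :
    MulAction.stabilizer A (a : A ⧸ H) = H.map (MulAut.conj a).toMonoidHom := by
  simpa using MulAction.stabilizer_smul_eq_stabilizer_map_conj a ((1 : A) : A ⧸ H)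

theorem eq_map_conj_of_le_stabilizer [Finite A] {D E : Subgroup A}
    (hD : Nat.Coprime (Nat.card D) D.index) {a : A}
    (hE : E ≤ MulAction.stabilizer A (a : A ⧸ normalizer (D : Set A)))
    (hcard : Nat.card E = Nat.card D) : E = D.map (MulAut.conj a).toMonoidHom := by
  have hcard_map : Nat.card (D.map (MulAut.conj a).toMonoidHom) = Nat.card D :=
    card_map_of_injective (MulAut.conj a).injective
  have hindex_map : (D.map (MulAut.conj a).toMonoidHom).index = D.index :=
    index_map_equiv D (MulAut.conj a)
  rw [stabilizer_mk_eq_map_conj, map_equiv_normalizer_eq] at hE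
  exact eq_of_le_normalizer_of_card_eq (hcard_map ▸ hindex_map ▸ hD) hE (hcard_map ▸ hcard)

theorem map_conj_mul (D : Subgroup A) (a b : A) :
    D.map (MulAut.conj (a * b)).toMonoidHom =
      (D.map (MulAut.conj b).toMonoidHom).map (MulAut.conj a).toMonoidHom := by
  rw [map_map, map_mul]
  rfl

theorem mk_eq_mk_of_map_conj_eq {D : Subgroup A} {a b : A}
    (h : D.map (MulAut.conj a).toMonoidHom = D.map (MulAut.conj b).toMonoidHom) :
    (a : A ⧸ normalizer (D : Set A)) = b := by
  rw [QuotientGroup.eq, mem_normalizer_iff_map_conj_eq, ← MulEquiv.toMonoidHom_eq_coe,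
    map_conj_mul, ← h, ← map_conj_mul, inv_mul_cancel, map_one]
  exact map_id D

end Subgroup

/-- Let `A` be a finite group with a normal Hall subgroup `G`, let `D` be a complement
to `G` in `A`, let `H = N_A(D)` and `X = A/H`.  Then `(A,G,X)` is exceptional: whenever
the `A`-orbit of a pair `(x,y) ∈ X × X` coincides with its `G`-orbit, `x = y`. -/
theorem hall_complement_exceptional
    (A : Type*) [Group A] [Fintype A]
    (G : Subgroup A) [G.Normal] (hHall : Nat.Coprime (Nat.card G) G.index)
    (D : Subgroup A) (hGD : G ⊓ D = ⊥)
    (hA : ∀ a : A, ∃ g ∈ G, ∃ d ∈ D, a = g * d) :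
    ∀ x y : A ⧸ Subgroup.normalizer (D : Set A),
      MulAction.orbit A ((x, y) : (A ⧸ Subgroup.normalizer (D : Set A)) × (A ⧸ Subgroup.normalizer (D : Set A))) =
        MulAction.orbit G ((x, y) : (A ⧸ Subgroup.normalizer (D : Set A)) × (A ⧸ Subgroup.normalizer (D : Set A))) →
      x = y := by
  intro x y horb
  obtain ⟨a, rfl⟩ := QuotientGroup.mk_surjective x
  obtain ⟨b, rfl⟩ := QuotientGroup.mk_surjective y
  have hcompl : G.IsComplement' D := by
    refine Subgroup.isComplement'_of_disjoint_and_mul_eq_univ (disjoint_iff.mpr hGD) ?_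
    refine Set.eq_univ_of_forall fun c => ?_
    obtain ⟨g, hg, d, hd, rfl⟩ := hA c
    exact Set.mul_mem_mul hg hd
  have hD : Nat.Coprime (Nat.card D) D.index := by
    rw [← hcompl.symm.index_eq_card, hcompl.index_eq_card]
    exact hHall.symm
  obtain ⟨E, hES, hE⟩ := Subgroup.exists_le_card_eq_index_of_sup_eq_top hHall
    (MulAction.sup_stabilizer_eq_top_of_orbit_eq horb)
  rw [MulAction.stabilizer_prod_eq_inf] at hES
  have hcard : Nat.card E = Nat.card D := hE.trans hcompl.symm.index_eq_card
  exact Subgroup.mk_eq_mk_of_map_conj_eq <|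
    (Subgroup.eq_map_conj_of_le_stabilizer hD (hES.trans inf_le_left) hcard).symm.trans
      (Subgroup.eq_map_conj_of_le_stabilizer hD (hES.trans inf_le_right) hcard)
end

section
/- Let G be a finite group, H a proper subgroup of G, and H₀ a normal subgroup of H. Then the cardinality of the union over all g ∈ G of the conjugates gH₀g⁻¹ is strictly less than |G|/[H:H₀]. -/
/-!
All conjugates of `H₀` have `|H₀|` elements and share the identity, and there are
`c = [G : N_G(H₀)]` of them, so their union has at most `c (|H₀| - 1) + 1` elements.
Since `H` normalizes `H₀`, `|G| = c · [N_G(H₀) : H] · [H : H₀] · |H₀|`, and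
`c · [N_G(H₀) : H] = [G : H] ≥ 2` makes `c (|H₀| - 1) + 1 < c · [N_G(H₀) : H] · |H₀|`.
-/

open Pointwise MulAction

theorem Set.ncard_biUnion_add_card_le {α ι : Type*} (s : Finset ι) (t : ι → Set α) (a : α)
    (hfin : ∀ i ∈ s, (t i).Finite) (ha : ∀ i ∈ s, a ∈ t i) :
    (⋃ i ∈ s, t i).ncard + s.card ≤ ∑ i ∈ s, (t i).ncard + 1 := by
  have hsub : (⋃ i ∈ s, t i) ⊆ {a} ∪ ⋃ i ∈ s, (t i \ {a}) := by
    intro x hx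
    by_cases hxa : x = a
    · exact Or.inl hxa
    · obtain ⟨i, hi, hxi⟩ := Set.mem_iUnion₂.mp hx
      exact Or.inr (Set.mem_iUnion₂.mpr ⟨i, hi, hxi, hxa⟩)
  have hfin' : ({a} ∪ ⋃ i ∈ s, (t i \ {a})).Finite :=
    (Set.finite_singleton a).union (s.finite_toSet.biUnion fun i hi => (hfin i hi).sdiff)
  have hunion : (⋃ i ∈ s, t i).ncard ≤ ∑ i ∈ s, (t i \ {a}).ncard + 1 :=
    calc (⋃ i ∈ s, t i).ncard
        ≤ ({a} ∪ ⋃ i ∈ s, (t i \ {a})).ncard := Set.ncard_le_ncard hsub hfin'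
      _ ≤ 1 + (⋃ i ∈ s, (t i \ {a})).ncard := by
        rw [← Set.ncard_singleton a]
        exact Set.ncard_union_le _ _
      _ ≤ ∑ i ∈ s, (t i \ {a}).ncard + 1 := by
        rw [add_comm]
        gcongr
        exact s.set_ncard_biUnion_le _
  rw [← Finset.sum_congr rfl fun i hi => Set.ncard_sdiff_singleton_add_one (ha i hi) (hfin i hi)]
  simp only [Finset.sum_add_distrib, Finset.sum_const, smul_eq_mul, mul_one]
  omega

namespace Subgroup

variable {G : Type*} [Group G]

theorem iUnion_conj_image_eq_biUnion_orbit (H : Subgroup G) :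
    ⋃ g : G, (fun x => g * x * g⁻¹) '' (H : Set G) =
      ⋃ K ∈ orbit (ConjAct G) H, (K : Set G) := by
  rw [orbit, Set.biUnion_range, ← ConjAct.toConjAct.surjective.iUnion_comp]
  refine Set.iUnion_congr fun g => ?_
  rw [coe_pointwise_smul]
  rfl

theorem ncard_orbit_conjAct (H : Subgroup G) :
    (orbit (ConjAct G) H).ncard = (normalizer (H : Set G)).index := by
  have hstab : (stabilizer (ConjAct G) H).comap (ConjAct.toConjAct : G ≃* ConjAct G).toMonoidHom =
      normalizer (H : Set G) := by
    ext g
    exact conjAct_pointwise_smul_iff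
  rw [← index_stabilizer, ← hstab, index_comap_of_surjective _ ConjAct.toConjAct.surjective]

theorem card_of_mem_orbit_conjAct {H K : Subgroup G} (hK : K ∈ orbit (ConjAct G) H) :
    Nat.card K = Nat.card H := by
  obtain ⟨g, rfl⟩ := hK
  exact Nat.card_congr (equivSMul g H).toEquiv.symm

theorem ncard_iUnion_conj_image_add_index_le [Finite G] (H : Subgroup G) :
    (⋃ g : G, (fun x => g * x * g⁻¹) '' (H : Set G)).ncard + (normalizer (H : Set G)).index ≤
      (normalizer (H : Set G)).index * Nat.card H + 1 := by
  have : Finite (Subgroup G) := Finite.of_injective _ SetLike.coe_injective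
  set O := orbit (ConjAct G) H
  have hO := Set.ncard_biUnion_add_card_le O.toFinite.toFinset (fun K : Subgroup G => (K : Set G)) 1
    (fun _ _ => Set.toFinite _) fun K _ => K.one_mem
  simp only [Set.Finite.mem_toFinset, ← Nat.card_coe_set_eq, SetLike.coe_sort_coe] at hO
  rwa [Finset.sum_congr rfl fun K hK =>
      card_of_mem_orbit_conjAct ((Set.Finite.mem_toFinset _).mp hK),
    Finset.sum_const, smul_eq_mul, ← Set.ncard_eq_toFinset_card O, ncard_orbit_conjAct,
    ← iUnion_conj_image_eq_biUnion_orbit] at hO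

end Subgroup

/-- Let `G` be a finite group, `H` a proper subgroup and `H₀` a normal subgroup of `H`.
Then the union of the `G`-conjugates of `H₀` has cardinality strictly less than
`|G|/[H:H₀]`. -/
theorem card_union_conjugates_lt
    (G : Type*) [Group G] [Fintype G] (H : Subgroup G) (hH : H ≠ ⊤)
    (H₀ : Subgroup G) (hle : H₀ ≤ H)
    (hnorm : ∀ h ∈ H, ∀ k ∈ H₀, h * k * h⁻¹ ∈ H₀) :
    (Set.ncard (⋃ g : G, (fun x => g * x * g⁻¹) '' (H₀ : Set G)) : ℝ) <
      (Fintype.card G : ℝ) / (H₀.relIndex H) := by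
  set S := ⋃ g : G, (fun x => g * x * g⁻¹) '' (H₀ : Set G)
  set N := Subgroup.normalizer (H₀ : Set G)
  have hHN : H ≤ N := fun h hh => Subgroup.mem_normalizer_fintype (hnorm h hh)
  have hS := H₀.ncard_iUnion_conj_image_add_index_le
  have hG : Nat.card H₀ * (H₀.relIndex H * (H.relIndex N * N.index)) =
      Fintype.card G := by
    rw [Subgroup.relIndex_mul_index hHN, Subgroup.relIndex_mul_index hle,
      Subgroup.card_mul_index, Nat.card_eq_fintype_card]
  have hindex : 2 ≤ H.relIndex N * N.index := by
    rw [Subgroup.relIndex_mul_index hHN]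
    exact Subgroup.one_lt_index_of_ne_top hH
  have hr : 0 < H₀.relIndex H := Nat.pos_of_ne_zero Subgroup.index_ne_zero_of_finite
  have hm : 0 < H.relIndex N := Nat.pos_of_ne_zero Subgroup.index_ne_zero_of_finite
  have h₀ : 0 < Nat.card H₀ := Nat.card_pos
  have hcard : S.ncard < Nat.card H₀ * (H.relIndex N * N.index) := by
    have hN : N.index ≤ H.relIndex N * N.index := Nat.le_mul_of_pos_left _ hm
    nlinarith
  have hlt : S.ncard * H₀.relIndex H < Fintype.card G := by
    rw [← hG, mul_left_comm, mul_comm (S.ncard)]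
    exact Nat.mul_lt_mul_of_pos_left hcard hr
  rw [lt_div_iff₀ (by exact_mod_cast hr)]
  exact_mod_cast hlt
end

section
/- Let G be a finite group, p a prime, and H a subgroup of G of index d. Then k_p(G) ≤ d·k_p(H) and k_p(H) ≤ d·k_p(G). Moreover, if H is normal in G, then k_p(G) ≤ k_p(H)·k_p(G/H). -/
/-- `kp G p` is the number of conjugacy classes of `p'`-elements of `G`, i.e. the
number of conjugacy classes all of whose elements have order coprime to `p`. -/
noncomputable def kp (G : Type*) [Group G] (p : ℕ) : ℕ :=
  Set.ncard {c : ConjClasses G | ∀ g ∈ ConjClasses.carrier c, Nat.Coprime (orderOf g) p}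

/-!
Everything rests on the count `∑_{x ∈ G p'} |C_G(x)| = k_p(G)·|G|`, which is orbit–stabilizer
summed over the `p'`-classes. Termwise, `|C_G(x)| ≤ |G : H|·|C_H(x)|`, and
`|C_G(x)| ≤ |C_{G/H}(xH)|·|C_H(x)|` when `H` is normal. It remains to see that for each coset `q`
of `H` the pairs `(x, h)` with `x ∈ q` a `p'`-element and `h ∈ C_H(x)` number at most
`k_p(H)·|H|`: the map `(x, h) ↦ (h_{p'}, x·h_p)` embeds them into the pairs `(t, g)` with `t ∈ H` a
`p'`-element and `g ∈ q ∩ C_G(t)`, and `q ∩ C_G(t)` is empty or a coset of `C_H(t)`.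
-/

open Finset Subgroup

section

open scoped Classical

variable {G : Type*} [Group G]

theorem card_centralizer_mul_ncard_carrier (x : G) :
    Nat.card (centralizer {x}) * (ConjClasses.mk x).carrier.ncard = Nat.card G := by
  rw [nat_card_centralizer_nat_card_stabilizer, ← ConjAct.orbit_eq_carrier_conjClasses,
    ← MulAction.index_stabilizer, card_mul_index]
  rfl

theorem sum_card_centralizer_of_mk_eq [Fintype G] (c : ConjClasses G) :
    ∑ x with ConjClasses.mk x = c, Nat.card (centralizer {x}) = Nat.card G := by
  obtain ⟨x₀, rfl⟩ := c.exists_rep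
  have hcard :
      #{x | ConjClasses.mk x = ConjClasses.mk x₀} = (ConjClasses.mk x₀).carrier.ncard := by
    rw [← Set.ncard_coe_finset]; congr 1; ext; simp [ConjClasses.mem_carrier_iff_mk_eq]
  have hpos : 0 < (ConjClasses.mk x₀).carrier.ncard :=
    (Set.ncard_pos (Set.toFinite _)).2 ⟨x₀, ConjClasses.mem_carrier_mk⟩
  refine Nat.eq_of_mul_eq_mul_right hpos ?_
  rw [sum_mul, sum_congr rfl fun x hx => ?_, sum_const, hcard, smul_eq_mul, mul_comm]
  rw [← (mem_filter.1 hx).2, card_centralizer_mul_ncard_carrier]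

theorem sum_card_centralizer_filter [Fintype G] (P : G → Prop) [DecidablePred P]
    (hP : ∀ ⦃x y⦄, IsConj x y → P x → P y) :
    ∑ x with P x, Nat.card (centralizer {x}) =
      {c : ConjClasses G | ∀ g ∈ c.carrier, P g}.ncard * Nat.card G := by
  have hfiber (c : ConjClasses G) :
      ∑ x ∈ {x | P x} with ConjClasses.mk x = c, Nat.card (centralizer {x}) =
      if ∀ g ∈ c.carrier, P g then Nat.card G else 0 := by
    split_ifs with hc
    · rw [← sum_card_centralizer_of_mk_eq c]
      refine sum_congr (ext fun x => ?_) fun _ _ => rfl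
      simp only [mem_filter, mem_univ, true_and]
      exact ⟨And.right, fun h => ⟨hc x (ConjClasses.mem_carrier_iff_mk_eq.2 h), h⟩⟩
    · refine sum_eq_zero fun x hx => absurd ?_ hc
      simp only [mem_filter, mem_univ, true_and] at hx
      obtain ⟨hPx, rfl⟩ := hx
      exact fun g hg => hP (ConjClasses.mk_eq_mk_iff_isConj.1
        (ConjClasses.mem_carrier_iff_mk_eq.1 hg).symm) hPx
  rw [← sum_fiberwise _ ConjClasses.mk, sum_congr rfl fun c _ => hfiber c, sum_ite,
    sum_const_zero, add_zero, sum_const, smul_eq_mul, Set.ncard_eq_toFinset_card',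
    Set.toFinset_ofPred]

theorem sum_card_centralizer_coprime [Fintype G] (p : ℕ) :
    ∑ x : G with (orderOf x).Coprime p, Nat.card (centralizer {x}) = kp G p * Nat.card G :=
  sum_card_centralizer_filter _ fun _ _ ⟨_, hc⟩ hx => hc.orderOf_eq ▸ hx

namespace Subgroup

theorem card_inf_mul_relIndex (H K : Subgroup G) :
    Nat.card (H ⊓ K : Subgroup G) * H.relIndex K = Nat.card K := by
  rw [← relIndex_bot_left, ← relIndex_bot_left, ← inf_relIndex_right H K,
    relIndex_mul_relIndex _ _ _ bot_le inf_le_right]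

theorem card_le_index_mul_card_inf (H K : Subgroup G) [H.FiniteIndex] :
    Nat.card K ≤ H.index * Nat.card (H ⊓ K : Subgroup G) := by
  rw [← card_inf_mul_relIndex H K, mul_comm, ← relIndex_top_right]
  exact Nat.mul_le_mul_right _
    (relIndex_le_of_le_right le_top (by simpa using FiniteIndex.index_ne_zero))

theorem card_eq_card_map_mk_mul_card_inf (N K : Subgroup G) [N.Normal] :
    Nat.card K = Nat.card (K.map (QuotientGroup.mk' N)) * Nat.card (N ⊓ K : Subgroup G) := by
  rw [← relIndex_ker, QuotientGroup.ker_mk', mul_comm, card_inf_mul_relIndex]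

theorem card_centralizer_le_quotient_mul [Finite G] (N : Subgroup G) [N.Normal] (x : G) :
    Nat.card (centralizer {x}) ≤
      Nat.card (centralizer {(x : G ⧸ N)}) * Nat.card (N ⊓ centralizer {x} : Subgroup G) := by
  rw [card_eq_card_map_mk_mul_card_inf N]
  refine Nat.mul_le_mul_right _ (card_le_of_le ?_)
  simpa using map_centralizer_le_centralizer_image {x} (QuotientGroup.mk' N)

theorem card_filter_mem [Fintype G] (K : Subgroup G) : #{g | g ∈ K} = Nat.card K := by
  rw [Nat.card_eq_fintype_card, Fintype.card_subtype]

theorem card_centralizer_eq_card_inf_centralizer (H : Subgroup G) (t : H) :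
    Nat.card (centralizer {t}) = Nat.card (H ⊓ centralizer {(t : G)} : Subgroup G) := by
  rw [← card_map_of_injective H.subtype_injective]
  congr 2
  ext g
  simp [mem_centralizer_singleton_iff, Subtype.ext_iff, and_comm]

theorem card_filter_coset_le [Fintype G] (H K : Subgroup G) (q : G ⧸ H) :
    #{g : G | (g : G ⧸ H) = q ∧ g ∈ K} ≤ Nat.card (H ⊓ K : Subgroup G) := by
  rcases ({g : G | (g : G ⧸ H) = q ∧ g ∈ K} : Finset G).eq_empty_or_nonempty with h | ⟨g₀, hg₀⟩
  · simp [h]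
  rw [← card_filter_mem]
  refine card_le_card_of_injOn (g₀⁻¹ * ·) (fun g hg => ?_) (mul_right_injective _).injOn
  simp only [coe_filter, mem_filter, mem_univ, true_and, Set.mem_ofPred_eq, mem_inf] at hg₀ hg ⊢
  exact ⟨QuotientGroup.eq.1 (hg₀.1.trans hg.1.symm), mul_mem (inv_mem hg₀.2) hg.2⟩

end Subgroup

theorem sum_card_inf_centralizer_eq [Fintype G] (p : ℕ) (H : Subgroup G) :
    ∑ t with t ∈ H ∧ (orderOf t).Coprime p, Nat.card (H ⊓ centralizer {t} : Subgroup G) =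
      kp H p * Nat.card H := by
  rw [← sum_card_centralizer_coprime]
  symm
  refine sum_bij (fun t _ => t) (fun t ht => ?_) (fun _ _ _ _ => Subtype.ext) (fun x hx => ?_)
    (fun t _ => card_centralizer_eq_card_inf_centralizer H t)
  · simpa using ht
  · simp only [mem_filter, mem_univ, true_and] at hx
    exact ⟨⟨x, hx.1⟩, by simpa using hx.2, rfl⟩

/-- `g ^ e` is the `p`-part of `g` and `g * (g ^ e)⁻¹` its `p'`-part. -/
theorem exists_zpow_pPart [Finite G] {p : ℕ} (hp : p.Prime) :
    ∃ e : ℤ, (∀ x : G, (orderOf x).Coprime p → x ^ e = 1) ∧ (∀ g : G, (g ^ e) ^ e = g ^ e) ∧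
      ∀ g : G, (orderOf (g * (g ^ e)⁻¹)).Coprime p := by
  set n := Nat.card G
  set a := p ^ n.factorization p
  set m := ordCompl[p] n
  have hm : m.Coprime p := (Nat.coprime_ordCompl hp Nat.card_pos.ne').symm
  have hn : (a : ℤ) * m = n := by rw [← Nat.cast_mul, Nat.ordProj_mul_ordCompl_eq_self]
  obtain ⟨u, v, huv⟩ : IsCoprime (a : ℤ) m := Nat.isCoprime_iff_coprime.2 (hm.symm.pow_left _)
  have hpow (g : G) (k : ℤ) : g ^ (k * n) = 1 :=
    orderOf_dvd_iff_zpow_eq_one.1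
      ((Int.natCast_dvd_natCast.2 (_root_.orderOf_dvd_natCard g)).mul_left k)
  refine ⟨v * m, fun x hx => ?_, fun g => ?_, fun g => ?_⟩
  · have : orderOf x ∣ m := (hx.pow_right _).dvd_of_dvd_mul_left
      (by rw [Nat.ordProj_mul_ordCompl_eq_self]; exact _root_.orderOf_dvd_natCard x)
    exact orderOf_dvd_iff_zpow_eq_one.1 ((Int.natCast_dvd_natCast.2 this).mul_left v)
  · rw [← zpow_mul, show v * m * (v * m) = v * m + -(u * v) * n by
      rw [← hn]; linear_combination (v * m) * huv, zpow_add, hpow, mul_one]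
  · refine Nat.Coprime.coprime_dvd_left (orderOf_dvd_of_pow_eq_one ?_) hm
    rw [← zpow_natCast, ← zpow_neg_one, ← zpow_mul, ← zpow_one_add, ← zpow_mul,
      show (1 + v * m * -1) * m = u * n by rw [← hn]; linear_combination -(m : ℤ) * huv, hpow]

/-- For `e` as in `exists_zpow_pPart`, `(x, h) ↦ (h_{p'}, x * h_p)`. -/
def shiftPPart (e : ℤ) (a : (_ : G) × G) : (_ : G) × G := ⟨a.2 * (a.2 ^ e)⁻¹, a.1 * a.2 ^ e⟩

theorem shiftPPart_shiftPPart {p : ℕ} {e : ℤ} (he₁ : ∀ x : G, (orderOf x).Coprime p → x ^ e = 1)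
    (he₂ : ∀ g : G, (g ^ e) ^ e = g ^ e) {a : (_ : G) × G} (ha : (orderOf a.1).Coprime p)
    (hcomm : Commute a.1 a.2) : shiftPPart e (shiftPPart e a) = a := by
  have : (a.1 * a.2 ^ e) ^ e = a.2 ^ e := by
    rw [(hcomm.zpow_right e).mul_zpow, he₁ _ ha, he₂, one_mul]
  simp [shiftPPart, this]

theorem sum_card_inf_centralizer_coset_le [Fintype G] {p : ℕ} (hp : p.Prime) (H : Subgroup G)
    (q : G ⧸ H) :
    ∑ x with (orderOf x).Coprime p ∧ (QuotientGroup.mk x : G ⧸ H) = q,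
        Nat.card (H ⊓ centralizer {x} : Subgroup G) ≤ kp H p * Nat.card H := by
  obtain ⟨e, he₁, he₂, he₃⟩ := exists_zpow_pPart (G := G) hp
  calc ∑ x with (orderOf x).Coprime p ∧ (QuotientGroup.mk x : G ⧸ H) = q,
        Nat.card (H ⊓ centralizer {x} : Subgroup G)
      = #(({x | (orderOf x).Coprime p ∧ (x : G ⧸ H) = q} : Finset G).sigma
          fun x => {h | h ∈ H ⊓ centralizer {x}}) := by
        simp only [card_sigma, card_filter_mem]
    _ ≤ #(({t | t ∈ H ∧ (orderOf t).Coprime p} : Finset G).sigma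
          fun t => {g : G | (g : G ⧸ H) = q ∧ g ∈ centralizer {t}}) := by
        refine card_le_card_of_injOn (shiftPPart e) (fun a ha => ?_) (fun a ha b hb hab => ?_)
        · obtain ⟨x, h⟩ := a
          simp only [coe_sigma, Set.mem_sigma_iff, coe_filter, mem_univ, true_and,
            Set.mem_ofPred_eq, Subgroup.mem_inf, mem_centralizer_singleton_iff, shiftPPart] at ha ⊢
          obtain ⟨⟨-, rfl⟩, hH, hhx⟩ := ha
          have hxh : Commute x h := hhx.symm
          refine ⟨⟨mul_mem hH (inv_mem (zpow_mem hH e)), he₃ h⟩,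
            QuotientGroup.mk_mul_of_mem x (zpow_mem hH e), Commute.eq ?_⟩
          exact (hxh.mul_right (hxh.zpow_right e).inv_right).mul_left
            (((Commute.refl h).zpow_left e).mul_right (Commute.refl _).inv_right)
        · simp only [coe_sigma, Set.mem_sigma_iff, coe_filter, mem_univ, true_and,
            Set.mem_ofPred_eq, Subgroup.mem_inf, mem_centralizer_singleton_iff] at ha hb
          rw [← shiftPPart_shiftPPart he₁ he₂ ha.1.1 ha.2.2.symm, hab,
            shiftPPart_shiftPPart he₁ he₂ hb.1.1 hb.2.2.symm]
    _ = _ := card_sigma _ _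
    _ ≤ ∑ t with t ∈ H ∧ (orderOf t).Coprime p, Nat.card (H ⊓ centralizer {t} : Subgroup G) :=
        sum_le_sum fun t _ => card_filter_coset_le H _ q
    _ = kp H p * Nat.card H := sum_card_inf_centralizer_eq p H

theorem kp_le_index_mul_kp_subgroup [Fintype G] {p : ℕ} (hp : p.Prime) (H : Subgroup G) :
    kp G p ≤ H.index * kp H p := by
  refine Nat.le_of_mul_le_mul_right ?_ (Nat.card_pos (α := G))
  calc kp G p * Nat.card G = ∑ x : G with (orderOf x).Coprime p, Nat.card (centralizer {x}) :=
        (sum_card_centralizer_coprime p).symm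
    _ ≤ ∑ x : G with (orderOf x).Coprime p,
          H.index * Nat.card (H ⊓ centralizer {x} : Subgroup G) :=
        sum_le_sum fun x _ => card_le_index_mul_card_inf H _
    _ = H.index * ∑ q : G ⧸ H, ∑ x with (orderOf x).Coprime p ∧ (QuotientGroup.mk x : G ⧸ H) = q,
          Nat.card (H ⊓ centralizer {x} : Subgroup G) := by
        rw [← mul_sum, ← sum_fiberwise _ (QuotientGroup.mk : G → G ⧸ H)]
        simp only [filter_filter]
    _ ≤ H.index * ∑ _q : G ⧸ H, kp H p * Nat.card H := by
        gcongr with q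
        exact sum_card_inf_centralizer_coset_le hp H q
    _ = H.index * kp H p * Nat.card G := by
        rw [sum_const, card_univ, ← Nat.card_eq_fintype_card, ← index_eq_card, smul_eq_mul,
          ← H.index_mul_card]
        ring

theorem kp_subgroup_le_index_mul_kp [Fintype G] (p : ℕ) (H : Subgroup G) :
    kp H p ≤ H.index * kp G p := by
  refine Nat.le_of_mul_le_mul_right ?_ (Nat.card_pos (α := H))
  calc kp H p * Nat.card H
        = ∑ t with t ∈ H ∧ (orderOf t).Coprime p, Nat.card (H ⊓ centralizer {t} : Subgroup G) :=
        (sum_card_inf_centralizer_eq p H).symm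
    _ ≤ ∑ t with t ∈ H ∧ (orderOf t).Coprime p, Nat.card (centralizer {t}) :=
        sum_le_sum fun t _ => card_le_of_le inf_le_right
    _ ≤ ∑ x : G with (orderOf x).Coprime p, Nat.card (centralizer {x}) :=
        sum_le_sum_of_subset (monotone_filter_right _ fun _ _ => And.right)
    _ = H.index * kp G p * Nat.card H := by
        rw [sum_card_centralizer_coprime, ← H.index_mul_card]
        ring

theorem kp_le_kp_mul_kp_quotient [Fintype G] {p : ℕ} (hp : p.Prime) (H : Subgroup G)
    [H.Normal] :
    kp G p ≤ kp H p * kp (G ⧸ H) p := by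
  refine Nat.le_of_mul_le_mul_right ?_ (Nat.card_pos (α := G))
  have hmaps : ∀ x ∈ ({x | (orderOf x).Coprime p} : Finset G),
      (x : G ⧸ H) ∈ ({q | (orderOf q).Coprime p} : Finset (G ⧸ H)) := by
    simp only [mem_filter, mem_univ, true_and]
    exact fun x hx => hx.coprime_dvd_left (orderOf_map_dvd (QuotientGroup.mk' H) x)
  calc kp G p * Nat.card G = ∑ x : G with (orderOf x).Coprime p, Nat.card (centralizer {x}) :=
        (sum_card_centralizer_coprime p).symm
    _ ≤ ∑ x : G with (orderOf x).Coprime p, Nat.card (centralizer {(x : G ⧸ H)}) *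
          Nat.card (H ⊓ centralizer {x} : Subgroup G) :=
        sum_le_sum fun x _ => card_centralizer_le_quotient_mul H x
    _ = ∑ q : G ⧸ H with (orderOf q).Coprime p, Nat.card (centralizer {q}) *
          ∑ x with (orderOf x).Coprime p ∧ (QuotientGroup.mk x : G ⧸ H) = q,
            Nat.card (H ⊓ centralizer {x} : Subgroup G) := by
        rw [← sum_fiberwise_of_maps_to hmaps]
        refine sum_congr rfl fun q _ => ?_
        rw [mul_sum, filter_filter]
        exact sum_congr rfl fun x hx => by rw [(mem_filter.1 hx).2.2]
    _ ≤ ∑ q : G ⧸ H with (orderOf q).Coprime p, Nat.card (centralizer {q}) *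
          (kp H p * Nat.card H) := by
        gcongr with q
        exact sum_card_inf_centralizer_coset_le hp H q
    _ = kp H p * kp (G ⧸ H) p * Nat.card G := by
        rw [← sum_mul, sum_card_centralizer_coprime, ← H.index_mul_card, index_eq_card]
        ring

end

/-- **(Gallagher-type lemma.)** Let `G` be a finite group, `p` a prime, and `H ≤ G` a
subgroup of index `d`.  Then `k_p(G) ≤ d·k_p(H)` and `k_p(H) ≤ d·k_p(G)`.  Moreover,
if `H` is normal in `G`, then `k_p(G) ≤ k_p(H)·k_p(G/H)`. -/
theorem kp_le_of_index
    (G : Type*) [Group G] [Fintype G] (p : ℕ) (hp : p.Prime)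
    (H : Subgroup G) (d : ℕ) (hd : H.index = d) :
    kp G p ≤ d * kp H p ∧ kp H p ≤ d * kp G p ∧
      ∀ (hN : H.Normal), letI := hN; kp G p ≤ kp H p * kp (G ⧸ H) p := by
  subst hd
  exact ⟨kp_le_index_mul_kp_subgroup hp H, kp_subgroup_le_index_mul_kp p H,
    fun _ => kp_le_kp_mul_kp_quotient hp H⟩
end
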